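/- arXiv:1807.02128 — 2 statements merged into one kernel-verified Lean document; each statement's English description precedes it below -/
import Mathlib

section
/- The multi-sample objectives are monotonically nondecreasing in the number of samples: for all L ≥ 1, L^{L+1} ≥ L^{L}, where L^L = E_{z^{1:L} iid ∼ q}[log ((1/L) Σ_{l=1}^L w(z^l))] with w(z) = p(x,z)/q(z). -/
/-!
The mean of `L + 1` weights is the average, over the `L + 1` ways of leaving one sample out, of
the means of the remaining `L` weights. By concavity of `log` (Jensen), the log of the full mean
dominates the average of the logs of the leave-one-out means, and each leave-one-out mean is a
function of `L` i.i.d. samples, so its expected log is the `L`-sample objective.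
-/

open MeasureTheory Finset

theorem Fin.sum_sum_succAbove {M : Type*} [AddCancelCommMonoid M] {n : ℕ}
    (f : Fin (n + 1) → M) :
    ∑ j : Fin (n + 1), ∑ l : Fin n, f (j.succAbove l) = n • ∑ k, f k := by
  refine add_left_cancel (a := ∑ k, f k) ?_
  calc ∑ k, f k + ∑ j : Fin (n + 1), ∑ l : Fin n, f (j.succAbove l)
      = ∑ j : Fin (n + 1), (f j + ∑ l : Fin n, f (j.succAbove l)) := by
        rw [sum_add_distrib]
    _ = ∑ _j : Fin (n + 1), ∑ k, f k :=
        sum_congr rfl fun j _ => (Fin.sum_univ_succAbove f j).symm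
    _ = ∑ k, f k + n • ∑ k, f k := by rw [Fin.sum_const, succ_nsmul']

theorem ConcaveOn.average_map_mean_succAbove_le {E : Type*} [AddCommGroup E] [Module ℝ E]
    {s : Set E} {f : E → ℝ} (hf : ConcaveOn ℝ s f) {n : ℕ} (hn : n ≠ 0)
    {x : Fin (n + 1) → E} (hx : ∀ k, x k ∈ s) :
    ((n : ℝ) + 1)⁻¹ * ∑ j : Fin (n + 1), f ((n : ℝ)⁻¹ • ∑ l, x (j.succAbove l))
      ≤ f (((n : ℝ) + 1)⁻¹ • ∑ k, x k) := by
  have hmean : ∀ j : Fin (n + 1), (n : ℝ)⁻¹ • ∑ l, x (j.succAbove l) ∈ s := fun j => by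
    rw [smul_sum]
    exact hf.1.sum_mem (fun _ _ => by positivity)
      (by simp [hn]) fun l _ => hx _
  have hjensen := hf.le_map_sum (t := univ) (w := fun _ => ((n : ℝ) + 1)⁻¹)
    (fun _ _ => by positivity)
    (by rw [Fin.sum_const, nsmul_eq_mul, Nat.cast_succ, mul_inv_cancel₀ (by positivity)])
    fun j _ => hmean j
  have hsum : ∑ j : Fin (n + 1), ((n : ℝ) + 1)⁻¹ • (n : ℝ)⁻¹ • ∑ l, x (j.succAbove l)
      = ((n : ℝ) + 1)⁻¹ • ∑ k, x k := by
    rw [← smul_sum, ← smul_sum, Fin.sum_sum_succAbove, ← Nat.cast_smul_eq_nsmul ℝ, smul_smul,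
      smul_smul, mul_assoc, inv_mul_cancel₀ (Nat.cast_ne_zero.2 hn), mul_one]
  rw [hsum] at hjensen
  rwa [mul_sum]

section LeaveOneOut

variable {α : Type*} [MeasurableSpace α] (ν : Measure α) [IsProbabilityMeasure ν] {n : ℕ}
  {g : (Fin n → α) → ℝ}

theorem measurePreserving_comp_succAbove (j : Fin (n + 1)) :
    MeasurePreserving (fun zs : Fin (n + 1) → α => zs ∘ j.succAbove)
      (Measure.pi fun _ => ν) (Measure.pi fun _ => ν) :=
  (measurePreserving_snd (μ := ν) ..).comp (measurePreserving_piFinSuccAbove (fun _ => ν) j)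

theorem MeasureTheory.Integrable.comp_succAbove (hg : Integrable g (Measure.pi fun _ => ν))
    (j : Fin (n + 1)) :
    Integrable (fun zs : Fin (n + 1) → α => g (zs ∘ j.succAbove)) (Measure.pi fun _ => ν) :=
  ((measurePreserving_comp_succAbove ν j).integrable_comp hg.1).2 hg

theorem MeasureTheory.Integrable.average_comp_succAbove
    (hg : Integrable g (Measure.pi fun _ => ν)) :
    Integrable
      (fun zs : Fin (n + 1) → α => ((n : ℝ) + 1)⁻¹ * ∑ j : Fin (n + 1), g (zs ∘ j.succAbove))
      (Measure.pi fun _ => ν) :=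
  (integrable_finsetSum _ fun j _ => hg.comp_succAbove ν j).const_mul _

theorem integral_eq_integral_average_comp_succAbove
    (hg : Integrable g (Measure.pi fun _ => ν)) :
    ∫ ws, g ws ∂(Measure.pi fun _ => ν)
      = ∫ zs : Fin (n + 1) → α, ((n : ℝ) + 1)⁻¹ * ∑ j : Fin (n + 1), g (zs ∘ j.succAbove)
          ∂(Measure.pi fun _ => ν) := by
  have hcomp : ∀ j : Fin (n + 1),
      ∫ zs : Fin (n + 1) → α, g (zs ∘ j.succAbove) ∂(Measure.pi fun _ => ν)
        = ∫ ws, g ws ∂(Measure.pi fun _ => ν) := fun j => by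
    have hj := measurePreserving_comp_succAbove ν j
    rw [← hj.map_eq, integral_map hj.aemeasurable (hj.map_eq ▸ hg.1)]
  rw [integral_const_mul, integral_finsetSum _ fun j _ => hg.comp_succAbove ν j]
  simp only [hcomp, Fin.sum_const, nsmul_eq_mul, Nat.cast_add, Nat.cast_one]
  field_simp

end LeaveOneOut

theorem stmt_4_general {α : Type*} [MeasurableSpace α] (ν : Measure α) [IsProbabilityMeasure ν]
    (w : α → ℝ) (hw0 : ∀ z, 0 < w z)
    (L : ℕ) (hL : 1 ≤ L)
    (hintL : Integrable
      (fun zs : Fin L → α => Real.log ((L : ℝ)⁻¹ * ∑ l, w (zs l)))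
      (Measure.pi fun _ : Fin L => ν))
    (hintL1 : Integrable
      (fun zs : Fin (L + 1) → α => Real.log (((L : ℝ) + 1)⁻¹ * ∑ l, w (zs l)))
      (Measure.pi fun _ : Fin (L + 1) => ν)) :
    ∫ zs : Fin L → α, Real.log ((L : ℝ)⁻¹ * ∑ l, w (zs l))
        ∂(Measure.pi fun _ : Fin L => ν)
      ≤ ∫ zs : Fin (L + 1) → α, Real.log (((L : ℝ) + 1)⁻¹ * ∑ l, w (zs l))
          ∂(Measure.pi fun _ : Fin (L + 1) => ν) := by
  rw [integral_eq_integral_average_comp_succAbove ν hintL]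
  refine integral_mono (hintL.average_comp_succAbove ν) hintL1 fun zs => ?_
  simpa only [smul_eq_mul, Function.comp_apply] using
    strictConcaveOn_log_Ioi.concaveOn.average_map_mean_succAbove_le (x := fun k => w (zs k))
      (by omega) fun k => Set.mem_Ioi.2 (hw0 (zs k))

/-- **Monotonicity of the multi-sample objectives in the number of samples.**
With importance weight `w z = p(x,z)/q(z)` (positive and integrable w.r.t. the
proposal law `ν`) and `L^L = E_{z^{1:L} iid ∼ ν}[log ((1/L) Σ_l w(z^l))]`,
we have `L^{L+1} ≥ L^L` for all `L ≥ 1`. -/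
theorem stmt_4 {α : Type*} [MeasurableSpace α] (ν : Measure α) [IsProbabilityMeasure ν]
    (w : α → ℝ) (hwmeas : Measurable w) (hw0 : ∀ z, 0 < w z)
    (hwint : Integrable w ν)
    (L : ℕ) (hL : 1 ≤ L)
    (hintL : Integrable
      (fun zs : Fin L → α => Real.log ((L : ℝ)⁻¹ * ∑ l, w (zs l)))
      (Measure.pi fun _ : Fin L => ν))
    (hintL1 : Integrable
      (fun zs : Fin (L + 1) → α => Real.log (((L : ℝ) + 1)⁻¹ * ∑ l, w (zs l)))
      (Measure.pi fun _ : Fin (L + 1) => ν)) :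
    ∫ zs : Fin L → α, Real.log ((L : ℝ)⁻¹ * ∑ l, w (zs l))
        ∂(Measure.pi fun _ : Fin L => ν)
      ≤ ∫ zs : Fin (L + 1) → α, Real.log (((L : ℝ) + 1)⁻¹ * ∑ l, w (zs l))
          ∂(Measure.pi fun _ : Fin (L + 1) => ν) :=
  stmt_4_general ν w hw0 L hL hintL hintL1
end

section
/- Discrete-time control-inference duality: with the Girsanov likelihood ratio above, the ELBO for the sequential model equals E_{q_u}[log p(x_{1:K}|z_{0:K}) + log(p_0(z_0)/q_0(z_0)) − (1/2) Σ_k ‖u_k‖² δt − Σ_k u_kᵀ √δt ε_k], and since E_{q_u}[u_kᵀ ε_k | z_{0:k}] = 0, maximizing the ELBO over (u, q_0) is equivalent to the stochastic control problem of minimizing E_{q_u}[V(z_{0:K}) + (1/2) Σ_k ‖u_k‖² δt] where V(z_{0:K}) = −log(p_0(z_0)/q_0(z_0)) − Σ_k log p(x_k|z_{t_k}). -/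
/-!
Each controlled transition kernel is the uncontrolled Gaussian kernel with the same covariance
`δt σσᵀ` and mean shifted by `δt σ u`. In the whitened variable `σ⁻¹ (z' - mean)`, completing
the square shows that the log-ratio of the two kernels is `-½‖u‖²δt - uᵀ√δt ε`, and summing
over the steps gives the discrete Girsanov formula for `log (p / q_u)`. Integrating against
`q_u`, the martingale term drops out because its expectation vanishes.
-/

open MeasureTheory Matrix Finset

/-- Multivariate Gaussian density on `ℝ^d` with mean `m` and covariance matrix `C`. -/
noncomputable def gaussD (d : ℕ) (m : Fin d → ℝ) (C : Matrix (Fin d) (Fin d) ℝ)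
    (z : Fin d → ℝ) : ℝ :=
  (Real.sqrt ((2 * Real.pi) ^ d * C.det))⁻¹ *
    Real.exp (-(1 / 2) * ((z - m) ⬝ᵥ C⁻¹.mulVec (z - m)))

/-- Path density of the uncontrolled (prior) discrete-time dynamics
`z_{k+1} = z_k + f(z_k)δt + σ(z_k)√δt ε_k`, `z_0 ∼ p_0`. -/
noncomputable def pPath (d K : ℕ) (f : (Fin d → ℝ) → Fin d → ℝ)
    (σm : (Fin d → ℝ) → Matrix (Fin d) (Fin d) ℝ) (δt : ℝ)
    (p0 : (Fin d → ℝ) → ℝ) (z : Fin (K + 1) → Fin d → ℝ) : ℝ :=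
  p0 (z 0) * ∏ k : Fin K,
    gaussD d (z k.castSucc + δt • f (z k.castSucc))
      (δt • (σm (z k.castSucc) * (σm (z k.castSucc))ᵀ)) (z k.succ)

/-- Path density of the controlled dynamics with feedback control policy `u_k(z_k)`
and initial density `q_0`. -/
noncomputable def qPath (d K : ℕ) (f : (Fin d → ℝ) → Fin d → ℝ)
    (σm : (Fin d → ℝ) → Matrix (Fin d) (Fin d) ℝ) (δt : ℝ)
    (q0 : (Fin d → ℝ) → ℝ) (u : Fin K → (Fin d → ℝ) → Fin d → ℝ)
    (z : Fin (K + 1) → Fin d → ℝ) : ℝ :=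
  q0 (z 0) * ∏ k : Fin K,
    gaussD d (z k.castSucc + δt • f (z k.castSucc)
        + δt • (σm (z k.castSucc)).mulVec (u k (z k.castSucc)))
      (δt • (σm (z k.castSucc) * (σm (z k.castSucc))ᵀ)) (z k.succ)

/-- The noise increment `ε_k` realizing the trajectory under the controlled dynamics:
`√δt ε_k = σ(z_k)⁻¹(z_{k+1} − z_k − f(z_k)δt − σ(z_k) u_k(z_k) δt)`. -/
noncomputable def noiseInc (d K : ℕ) (f : (Fin d → ℝ) → Fin d → ℝ)
    (σm : (Fin d → ℝ) → Matrix (Fin d) (Fin d) ℝ) (δt : ℝ)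
    (u : Fin K → (Fin d → ℝ) → Fin d → ℝ) (z : Fin (K + 1) → Fin d → ℝ)
    (k : Fin K) : Fin d → ℝ :=
  (Real.sqrt δt)⁻¹ •
    (σm (z k.castSucc))⁻¹.mulVec
      (z k.succ - z k.castSucc - δt • f (z k.castSucc)
        - δt • (σm (z k.castSucc)).mulVec (u k (z k.castSucc)))

theorem integral_sub_eq_integral_of_integral_eq_zero {α E : Type*} [MeasurableSpace α]
    [NormedAddCommGroup E] [NormedSpace ℝ E] {μ : Measure α} {f g : α → E}
    (hg : Integrable g μ) (hg0 : ∫ x, g x ∂μ = 0) :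
    ∫ x, f x - g x ∂μ = ∫ x, f x ∂μ := by
  by_cases hf : Integrable f μ
  · rw [integral_sub hf hg, hg0, sub_zero]
  · have hfg : ¬ Integrable (f - g) μ := by
      rwa [sub_eq_add_neg, integrable_add_iff_integrable_left hg.neg]
    exact (integral_undef hfg).trans (integral_undef hf).symm

section Gaussian

variable {d : ℕ}

theorem gaussD_pos {C : Matrix (Fin d) (Fin d) ℝ} (hC : 0 < C.det) (m z : Fin d → ℝ) :
    0 < gaussD d m C z := by
  unfold gaussD
  have := Real.pi_pos
  positivity

theorem log_gaussD_sub_log_gaussD {C : Matrix (Fin d) (Fin d) ℝ} (hC : 0 < C.det)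
    (m m' z : Fin d → ℝ) :
    Real.log (gaussD d m C z) - Real.log (gaussD d m' C z)
      = (1 / 2) * ((z - m') ⬝ᵥ C⁻¹ *ᵥ (z - m')) - (1 / 2) * ((z - m) ⬝ᵥ C⁻¹ *ᵥ (z - m)) := by
  have hN : (Real.sqrt ((2 * Real.pi) ^ d * C.det))⁻¹ ≠ 0 := by
    have := Real.pi_pos
    positivity
  unfold gaussD
  rw [Real.log_mul hN (Real.exp_ne_zero _), Real.log_mul hN (Real.exp_ne_zero _),
    Real.log_exp, Real.log_exp]
  ring

variable {c : ℝ} {s : Matrix (Fin d) (Fin d) ℝ}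

theorem det_smul_mul_transpose_pos (hc : 0 < c) (hs : IsUnit s.det) :
    0 < (c • (s * sᵀ)).det := by
  rw [det_smul, det_mul, det_transpose, Fintype.card_fin]
  exact mul_pos (pow_pos hc d) (mul_self_pos.mpr hs.ne_zero)

theorem mulVec_dotProduct_inv_smul_mul_transpose_mulVec (hc : c ≠ 0) (hs : IsUnit s.det)
    (v w : Fin d → ℝ) :
    (s *ᵥ v) ⬝ᵥ (c • (s * sᵀ))⁻¹ *ᵥ (s *ᵥ w) = c⁻¹ * (v ⬝ᵥ w) := by
  have hinv : (c • (s * sᵀ))⁻¹ = c⁻¹ • (sᵀ⁻¹ * s⁻¹) := by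
    refine inv_eq_right_inv ?_
    rw [smul_mul_smul_comm, mul_inv_cancel₀ hc, one_smul, Matrix.mul_assoc,
      ← Matrix.mul_assoc sᵀ, mul_nonsing_inv _ (by rwa [det_transpose]), Matrix.one_mul,
      mul_nonsing_inv _ hs]
  have hcancel : ∀ x, s⁻¹ *ᵥ (s *ᵥ x) = x := fun x => by
    rw [mulVec_mulVec, nonsing_inv_mul _ hs, one_mulVec]
  rw [hinv, ← transpose_nonsing_inv, smul_mulVec, dotProduct_smul, ← mulVec_mulVec,
    dotProduct_mulVec, vecMul_transpose, hcancel, hcancel, smul_eq_mul]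

theorem log_gaussD_sub_log_gaussD_add_mean (hc : 0 < c) (hs : IsUnit s.det)
    (m u z : Fin d → ℝ) :
    Real.log (gaussD d m (c • (s * sᵀ)) z)
        - Real.log (gaussD d (m + c • s *ᵥ u) (c • (s * sᵀ)) z)
      = -((1 / 2) * (u ⬝ᵥ u) * c) - u ⬝ᵥ s⁻¹ *ᵥ (z - (m + c • s *ᵥ u)) := by
  set w := s⁻¹ *ᵥ (z - (m + c • s *ᵥ u))
  have hw : z - (m + c • s *ᵥ u) = s *ᵥ w := by
    rw [mulVec_mulVec, mul_nonsing_inv _ hs, one_mulVec]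
  have hw' : z - m = s *ᵥ (w + c • u) := by
    rw [mulVec_add, ← hw, mulVec_smul]
    abel
  rw [log_gaussD_sub_log_gaussD (det_smul_mul_transpose_pos hc hs), hw, hw',
    mulVec_dotProduct_inv_smul_mul_transpose_mulVec hc.ne' hs,
    mulVec_dotProduct_inv_smul_mul_transpose_mulVec hc.ne' hs]
  simp only [add_dotProduct, dotProduct_add, smul_dotProduct, dotProduct_smul, smul_eq_mul,
    dotProduct_comm w u]
  field_simp
  ring

end Gaussian

section Path

variable {d K : ℕ} {f : (Fin d → ℝ) → Fin d → ℝ} {σm : (Fin d → ℝ) → Matrix (Fin d) (Fin d) ℝ}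
  {δt : ℝ}

theorem sqrt_smul_noiseInc (hδt : 0 < δt) (u : Fin K → (Fin d → ℝ) → Fin d → ℝ)
    (z : Fin (K + 1) → Fin d → ℝ) (k : Fin K) :
    Real.sqrt δt • noiseInc d K f σm δt u z k
      = (σm (z k.castSucc))⁻¹ *ᵥ (z k.succ - (z k.castSucc + δt • f (z k.castSucc)
          + δt • σm (z k.castSucc) *ᵥ u k (z k.castSucc))) := by
  rw [noiseInc, smul_smul, mul_inv_cancel₀ (Real.sqrt_pos.mpr hδt).ne', one_smul]
  congr 1
  abel

variable (hδt : 0 < δt) (hσ : ∀ v, IsUnit (σm v).det)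
include hδt hσ

theorem pPath_pos {p0 : (Fin d → ℝ) → ℝ} (hp0 : ∀ v, 0 < p0 v) (z : Fin (K + 1) → Fin d → ℝ) :
    0 < pPath d K f σm δt p0 z :=
  mul_pos (hp0 _) (prod_pos fun _ _ => gaussD_pos (det_smul_mul_transpose_pos hδt (hσ _)) _ _)

theorem qPath_pos {q0 : (Fin d → ℝ) → ℝ} (hq0 : ∀ v, 0 < q0 v)
    (u : Fin K → (Fin d → ℝ) → Fin d → ℝ) (z : Fin (K + 1) → Fin d → ℝ) :
    0 < qPath d K f σm δt q0 u z :=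
  mul_pos (hq0 _) (prod_pos fun _ _ => gaussD_pos (det_smul_mul_transpose_pos hδt (hσ _)) _ _)

theorem log_transition_sub_log_controlled_transition (u : Fin K → (Fin d → ℝ) → Fin d → ℝ)
    (z : Fin (K + 1) → Fin d → ℝ) (k : Fin K) :
    Real.log (gaussD d (z k.castSucc + δt • f (z k.castSucc))
        (δt • (σm (z k.castSucc) * (σm (z k.castSucc))ᵀ)) (z k.succ))
      - Real.log (gaussD d (z k.castSucc + δt • f (z k.castSucc)
          + δt • σm (z k.castSucc) *ᵥ u k (z k.castSucc))
        (δt • (σm (z k.castSucc) * (σm (z k.castSucc))ᵀ)) (z k.succ))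
    = -(1 / 2 * ((u k (z k.castSucc) ⬝ᵥ u k (z k.castSucc)) * δt))
      - u k (z k.castSucc) ⬝ᵥ (Real.sqrt δt • noiseInc d K f σm δt u z k) := by
  rw [sqrt_smul_noiseInc hδt, ← mul_assoc]
  exact log_gaussD_sub_log_gaussD_add_mean hδt (hσ _) _ _ _

theorem log_pPath_div_qPath {p0 q0 : (Fin d → ℝ) → ℝ} (hp0 : ∀ v, 0 < p0 v)
    (hq0 : ∀ v, 0 < q0 v) (u : Fin K → (Fin d → ℝ) → Fin d → ℝ)
    (z : Fin (K + 1) → Fin d → ℝ) :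
    Real.log (pPath d K f σm δt p0 z / qPath d K f σm δt q0 u z)
      = Real.log (p0 (z 0) / q0 (z 0))
        - (1 / 2) * ∑ k : Fin K, (u k (z k.castSucc) ⬝ᵥ u k (z k.castSucc)) * δt
        - ∑ k : Fin K, u k (z k.castSucc) ⬝ᵥ (Real.sqrt δt • noiseInc d K f σm δt u z k) := by
  have hgauss : ∀ m v z', gaussD d m (δt • (σm v * (σm v)ᵀ)) z' ≠ 0 := fun m v z' =>
    (gaussD_pos (det_smul_mul_transpose_pos hδt (hσ v)) m z').ne'
  have hsteps := sum_congr (s₁ := univ) rfl fun k _ =>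
    log_transition_sub_log_controlled_transition (f := f) hδt hσ u z k
  rw [sum_sub_distrib, sum_sub_distrib, sum_neg_distrib, ← mul_sum] at hsteps
  rw [Real.log_div (pPath_pos hδt hσ hp0 z).ne' (qPath_pos hδt hσ hq0 u z).ne', pPath, qPath,
    Real.log_mul (hp0 _).ne' (prod_ne_zero_iff.mpr fun _ _ => hgauss _ _ _),
    Real.log_mul (hq0 _).ne' (prod_ne_zero_iff.mpr fun _ _ => hgauss _ _ _),
    Real.log_prod fun _ _ => hgauss _ _ _, Real.log_prod fun _ _ => hgauss _ _ _,
    Real.log_div (hp0 _).ne' (hq0 _).ne']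
  linarith

theorem log_pPath_mul_div_qPath {p0 q0 : (Fin d → ℝ) → ℝ} (hp0 : ∀ v, 0 < p0 v)
    (hq0 : ∀ v, 0 < q0 v) (u : Fin K → (Fin d → ℝ) → Fin d → ℝ) {L : ℝ} (hL : L ≠ 0)
    (z : Fin (K + 1) → Fin d → ℝ) :
    Real.log (pPath d K f σm δt p0 z * L / qPath d K f σm δt q0 u z)
      = Real.log L + Real.log (p0 (z 0) / q0 (z 0))
        - (1 / 2) * ∑ k : Fin K, (u k (z k.castSucc) ⬝ᵥ u k (z k.castSucc)) * δt
        - ∑ k : Fin K, u k (z k.castSucc) ⬝ᵥ (Real.sqrt δt • noiseInc d K f σm δt u z k) := by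
  rw [mul_div_right_comm, Real.log_mul (div_pos (pPath_pos hδt hσ hp0 z)
    (qPath_pos hδt hσ hq0 u z)).ne' hL, log_pPath_div_qPath hδt hσ hp0 hq0]
  ring

end Path

theorem stmt_11_general (d K : ℕ)
    (f : (Fin d → ℝ) → Fin d → ℝ) (σm : (Fin d → ℝ) → Matrix (Fin d) (Fin d) ℝ)
    (δt : ℝ) (hδt : 0 < δt) (hσ : ∀ v, IsUnit (σm v).det)
    (p0 q0 : (Fin d → ℝ) → ℝ) (hp0 : ∀ v, 0 < p0 v) (hq0 : ∀ v, 0 < q0 v)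
    (u : Fin K → (Fin d → ℝ) → Fin d → ℝ)
    (g : Fin K → (Fin d → ℝ) → ℝ) (hg : ∀ k v, 0 < g k v)
    (ρ : Measure (Fin (K + 1) → Fin d → ℝ))
    -- integrability of the various pieces of the ELBO integrand
    (hInt4 : Integrable (fun z => qPath d K f σm δt q0 u z *
        (∑ k : Fin K, u k (z k.castSucc) ⬝ᵥ
          (Real.sqrt δt • noiseInc d K f σm δt u z k))) ρ)
    -- the martingale term has zero expectation under `q_u`
    (hmart : ∫ z, qPath d K f σm δt q0 u z *
        (∑ k : Fin K, u k (z k.castSucc) ⬝ᵥ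
          (Real.sqrt δt • noiseInc d K f σm δt u z k)) ∂ρ = 0) :
    -- the ELBO written via the discrete Girsanov likelihood ratio
    (∫ z, qPath d K f σm δt q0 u z *
        Real.log ((pPath d K f σm δt p0 z * ∏ k : Fin K, g k (z k.succ)) /
          qPath d K f σm δt q0 u z) ∂ρ
      = ∫ z, qPath d K f σm δt q0 u z *
          (Real.log (∏ k : Fin K, g k (z k.succ))
            + Real.log (p0 (z 0) / q0 (z 0))
            - (1 / 2) * ∑ k : Fin K, (u k (z k.castSucc) ⬝ᵥ u k (z k.castSucc)) * δt
            - ∑ k : Fin K, u k (z k.castSucc) ⬝ᵥ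
                (Real.sqrt δt • noiseInc d K f σm δt u z k)) ∂ρ) ∧
    -- hence the ELBO equals minus the stochastic-optimal-control cost
    (∫ z, qPath d K f σm δt q0 u z *
        Real.log ((pPath d K f σm δt p0 z * ∏ k : Fin K, g k (z k.succ)) /
          qPath d K f σm δt q0 u z) ∂ρ
      = -∫ z, qPath d K f σm δt q0 u z *
          ((-Real.log (p0 (z 0) / q0 (z 0)) - ∑ k : Fin K, Real.log (g k (z k.succ)))
            + (1 / 2) * ∑ k : Fin K,
                (u k (z k.castSucc) ⬝ᵥ u k (z k.castSucc)) * δt) ∂ρ) := by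
  have hG : ∀ z : Fin (K + 1) → Fin d → ℝ, ∏ k : Fin K, g k (z k.succ) ≠ 0 :=
    fun z => (prod_pos fun k _ => hg k _).ne'
  refine ⟨integral_congr_ae (ae_of_all _ fun z => ?_),
    (integral_congr_ae (ae_of_all _ fun z => ?_)).trans
      ((integral_sub_eq_integral_of_integral_eq_zero hInt4 hmart).trans (integral_neg _))⟩
  · beta_reduce
    rw [log_pPath_mul_div_qPath hδt hσ hp0 hq0 u (hG z)]
  · rw [log_pPath_mul_div_qPath hδt hσ hp0 hq0 u (hG z), Real.log_prod fun k _ => (hg k _).ne']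
    ring

/-- **Discrete-time control–inference duality.**
For the discrete-time latent Gaussian state space model with factorized observation
likelihood `g k (z_{k+1}) = p(x_{k+1}|z_{k+1})`, the ELBO (with variational path density
`q_u` and generative path density `p · likelihood`) equals
`E_{q_u}[log p(x|z) + log(p_0/q_0) − (1/2)Σ‖u_k‖²δt − Σ u_kᵀ√δt ε_k]`; and since the
martingale term has zero expectation (`hmart`), the ELBO equals
`−E_{q_u}[V(z_{0:K}) + (1/2)Σ‖u_k‖²δt]` with
`V(z_{0:K}) = −log(p_0(z_0)/q_0(z_0)) − Σ_k log p(x_k|z_k)`: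
maximizing the ELBO over `(u, q_0)` is the stochastic optimal control problem of
minimizing `E_{q_u}[V + (1/2)Σ‖u_k‖²δt]`. -/
theorem stmt_11 (d K : ℕ)
    (f : (Fin d → ℝ) → Fin d → ℝ) (σm : (Fin d → ℝ) → Matrix (Fin d) (Fin d) ℝ)
    (δt : ℝ) (hδt : 0 < δt) (hσ : ∀ v, IsUnit (σm v).det)
    (p0 q0 : (Fin d → ℝ) → ℝ) (hp0 : ∀ v, 0 < p0 v) (hq0 : ∀ v, 0 < q0 v)
    (u : Fin K → (Fin d → ℝ) → Fin d → ℝ)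
    (g : Fin K → (Fin d → ℝ) → ℝ) (hg : ∀ k v, 0 < g k v)
    (ρ : Measure (Fin (K + 1) → Fin d → ℝ))
    (hρ : ρ = Measure.pi fun _ : Fin (K + 1) => (volume : Measure (Fin d → ℝ)))
    -- integrability of the various pieces of the ELBO integrand
    (hInt1 : Integrable (fun z => qPath d K f σm δt q0 u z *
        Real.log (∏ k : Fin K, g k (z k.succ))) ρ)
    (hInt2 : Integrable (fun z => qPath d K f σm δt q0 u z *
        Real.log (p0 (z 0) / q0 (z 0))) ρ)
    (hInt3 : Integrable (fun z => qPath d K f σm δt q0 u z *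
        ((1 / 2) * ∑ k : Fin K,
          (u k (z k.castSucc) ⬝ᵥ u k (z k.castSucc)) * δt)) ρ)
    (hInt4 : Integrable (fun z => qPath d K f σm δt q0 u z *
        (∑ k : Fin K, u k (z k.castSucc) ⬝ᵥ
          (Real.sqrt δt • noiseInc d K f σm δt u z k))) ρ)
    -- the martingale term has zero expectation under `q_u`
    (hmart : ∫ z, qPath d K f σm δt q0 u z *
        (∑ k : Fin K, u k (z k.castSucc) ⬝ᵥ
          (Real.sqrt δt • noiseInc d K f σm δt u z k)) ∂ρ = 0) :
    -- the ELBO written via the discrete Girsanov likelihood ratio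
    (∫ z, qPath d K f σm δt q0 u z *
        Real.log ((pPath d K f σm δt p0 z * ∏ k : Fin K, g k (z k.succ)) /
          qPath d K f σm δt q0 u z) ∂ρ
      = ∫ z, qPath d K f σm δt q0 u z *
          (Real.log (∏ k : Fin K, g k (z k.succ))
            + Real.log (p0 (z 0) / q0 (z 0))
            - (1 / 2) * ∑ k : Fin K, (u k (z k.castSucc) ⬝ᵥ u k (z k.castSucc)) * δt
            - ∑ k : Fin K, u k (z k.castSucc) ⬝ᵥ
                (Real.sqrt δt • noiseInc d K f σm δt u z k)) ∂ρ) ∧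
    -- hence the ELBO equals minus the stochastic-optimal-control cost
    (∫ z, qPath d K f σm δt q0 u z *
        Real.log ((pPath d K f σm δt p0 z * ∏ k : Fin K, g k (z k.succ)) /
          qPath d K f σm δt q0 u z) ∂ρ
      = -∫ z, qPath d K f σm δt q0 u z *
          ((-Real.log (p0 (z 0) / q0 (z 0)) - ∑ k : Fin K, Real.log (g k (z k.succ)))
            + (1 / 2) * ∑ k : Fin K,
                (u k (z k.castSucc) ⬝ᵥ u k (z k.castSucc)) * δt) ∂ρ) :=
  stmt_11_general d K f σm δt hδt hσ p0 q0 hp0 hq0 u g hg ρ hInt4 hmart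
end
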